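/- arXiv:2206.03433 — 2 statements merged into one kernel-verified Lean document; each statement's English description precedes it below -/
import Mathlib

section
/- Let n ≥ 4 be even. The ℚ-linear map I : Θ_n → Θ_{n+1} determined on basis symbols by I([a,b,c]^l) = (1/(l+1))·[a,b,c]^{l+1} is well defined (every basis symbol of Θ_n has l ∈ {0,1} and its image is a nonzero basis symbol of Θ_{n+1}), is a linear isomorphism of Θ_n onto Θ_{n+1}, and commutes with the differential: d ∘ I = I ∘ d on Θ_n. -/
/-- Validity condition for a theta-graph basis symbol `[a,b,c]^l`:
`0 ≤ a < b < c`, `l ∈ {0,1,2}`, with the parity conventions that `l = 0`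
requires `a + b + c` even and `l = 2` requires `a + b + c` odd. -/
def validSym (a b c l : ℤ) : Prop :=
  0 ≤ a ∧ a < b ∧ b < c ∧ (l = 0 ∨ l = 1 ∨ l = 2) ∧
    (l = 0 → Even (a + b + c)) ∧ (l = 2 → Odd (a + b + c))

/-- The indexing set of valid theta symbols. -/
def SymIdx : Type := {p : ℤ × ℤ × ℤ × ℤ // validSym p.1 p.2.1 p.2.2.1 p.2.2.2}

/-- The theta space `Θ`: the free `ℚ`-vector space on the valid symbols. -/
abbrev Theta : Type := SymIdx →₀ ℚ

/-- The symbol `[a,b,c]^l ∈ Θ`, extended by `0` when the validity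
conditions fail. -/
noncomputable def sym (a b c l : ℤ) : Theta := by
  classical
  exact if h : validSym a b c l then Finsupp.single ⟨(a, b, c, l), h⟩ 1 else 0

/-- Value of the differential on a basis symbol. -/
noncomputable def dAux (p : SymIdx) : Theta := by
  classical
  exact
    if p.1.2.2.2 = 1 then
      sym (p.1.1 + 1) p.1.2.1 p.1.2.2.1 0 - sym p.1.1 (p.1.2.1 + 1) p.1.2.2.1 0
        + sym p.1.1 p.1.2.1 (p.1.2.2.1 + 1) 0
    else if p.1.2.2.2 = 2 then
      (2 : ℚ) • (sym (p.1.1 + 1) p.1.2.1 p.1.2.2.1 1 - sym p.1.1 (p.1.2.1 + 1) p.1.2.2.1 1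
        + sym p.1.1 p.1.2.1 (p.1.2.2.1 + 1) 1)
    else 0

/-- The `ℚ`-linear differential `d : Θ → Θ`, given on basis symbols by
`d [a,b,c]^0 = 0`, `d [a,b,c]^1 = [a+1,b,c]^0 - [a,b+1,c]^0 + [a,b,c+1]^0`,
`d [a,b,c]^2 = 2([a+1,b,c]^1 - [a,b+1,c]^1 + [a,b,c+1]^1)`. -/
noncomputable def dTheta : Theta →ₗ[ℚ] Theta :=
  Finsupp.lsum ℚ fun p => LinearMap.toSpanSingleton ℚ Theta (dAux p)

/-- The weight-`n` part `Θ_n`: the span of the symbols `[a,b,c]^l` with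
`a + b + c + l = n`. -/
noncomputable def ThetaN (n : ℤ) : Submodule ℚ Theta :=
  Submodule.span ℚ {x | ∃ a b c l : ℤ, a + b + c + l = n ∧ x = sym a b c l}

/-!
Think of `[a,b,c]^l` as `t^l` in a variable `t`. Then `I` is `t^l ↦ t^(l+1)/(l+1)` and has the
two-sided inverse `t^l ↦ l t^(l-1)`. Both preserve validity of symbols: in even weight the valid
symbols are the ordered triples with `l ∈ {0,1}`, in odd weight those with `l ∈ {1,2}`, so shifting
`l` by one matches them bijectively. Commutation with `d` is checked on symbols: for `l = 0` both
sides vanish because every term of `d [a,b,c]^1` has odd `a+b+c` and exponent `0`; for `l = 1` the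
factor `1/2` of `I` cancels the factor `2` in `d [a,b,c]^2`.
-/

lemma sym_of_validSym {a b c l : ℤ} (h : validSym a b c l) :
    sym a b c l = Finsupp.single (⟨(a, b, c, l), h⟩ : SymIdx) 1 :=
  dif_pos h

lemma sym_of_not_validSym {a b c l : ℤ} (h : ¬validSym a b c l) : sym a b c l = 0 :=
  dif_neg h

lemma sym_ne_zero {a b c l : ℤ} (h : validSym a b c l) : sym a b c l ≠ 0 := by
  rw [sym_of_validSym h]
  exact Finsupp.single_ne_zero.mpr one_ne_zero

lemma sym_mem_thetaN {a b c l n : ℤ} (hw : a + b + c + l = n) : sym a b c l ∈ ThetaN n :=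
  Submodule.subset_span ⟨a, b, c, l, hw, rfl⟩

lemma sym_zero_of_odd {a b c : ℤ} (h : Odd (a + b + c)) : sym a b c 0 = 0 :=
  sym_of_not_validSym fun hv => (Int.not_even_iff_odd.mpr h) (hv.2.2.2.2.1 rfl)

lemma validSym_iff_of_even {a b c l : ℤ} (h : Even (a + b + c + l)) :
    validSym a b c l ↔ (0 ≤ a ∧ a < b ∧ b < c) ∧ (l = 0 ∨ l = 1) := by
  rw [Int.even_iff] at h
  simp only [validSym, Int.even_iff, Int.odd_iff]
  omega

lemma validSym_add_one_iff {a b c l : ℤ} (h : Even (a + b + c + l)) :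
    validSym a b c (l + 1) ↔ validSym a b c l := by
  rw [Int.even_iff] at h
  simp only [validSym, Int.even_iff, Int.odd_iff]
  omega

lemma linearCombination_sym (g : SymIdx → Theta) {a b c l : ℤ} (h : validSym a b c l) :
    Finsupp.linearCombination ℚ g (sym a b c l) = g ⟨(a, b, c, l), h⟩ := by
  rw [sym_of_validSym h]
  exact (Finsupp.linearCombination_single ℚ 1 _).trans (one_smul ℚ _)

lemma thetaN_le_comap_of_sym {f : Theta →ₗ[ℚ] Theta} {m n : ℤ}
    (h : ∀ a b c l, validSym a b c l → a + b + c + l = m → f (sym a b c l) ∈ ThetaN n) :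
    ThetaN m ≤ (ThetaN n).comap f := by
  refine Submodule.span_le.mpr ?_
  rintro _ ⟨a, b, c, l, hw, rfl⟩
  by_cases hv : validSym a b c l
  · exact h a b c l hv hw
  · simp [sym_of_not_validSym hv]

lemma eqOn_thetaN_of_sym {f g : Theta →ₗ[ℚ] Theta} {n : ℤ}
    (h : ∀ a b c l, validSym a b c l → a + b + c + l = n → f (sym a b c l) = g (sym a b c l)) :
    Set.EqOn f g (ThetaN n) := by
  refine LinearMap.eqOn_span' ?_
  rintro _ ⟨a, b, c, l, hw, rfl⟩
  by_cases hv : validSym a b c l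
  · exact h a b c l hv hw
  · simp [sym_of_not_validSym hv]

lemma dTheta_sym_zero (a b c : ℤ) : dTheta (sym a b c 0) = 0 := by
  by_cases hv : validSym a b c 0
  · exact (linearCombination_sym dAux hv).trans (by simp [dAux])
  · rw [sym_of_not_validSym hv, map_zero]

lemma dTheta_sym_one {a b c : ℤ} (hv : validSym a b c 1) :
    dTheta (sym a b c 1) = sym (a + 1) b c 0 - sym a (b + 1) c 0 + sym a b (c + 1) 0 :=
  (linearCombination_sym dAux hv).trans (by simp [dAux])

lemma dTheta_sym_two {a b c : ℤ} (hv : validSym a b c 2) :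
    dTheta (sym a b c 2)
      = (2 : ℚ) • (sym (a + 1) b c 1 - sym a (b + 1) c 1 + sym a b (c + 1) 1) :=
  (linearCombination_sym dAux hv).trans (by simp [dAux])

lemma dTheta_le_comap (n : ℤ) : ThetaN n ≤ (ThetaN n).comap dTheta := by
  refine thetaN_le_comap_of_sym fun a b c l hv hw => ?_
  rcases hv.2.2.2.1 with rfl | rfl | rfl
  · rw [dTheta_sym_zero]
    exact zero_mem _
  · rw [dTheta_sym_one hv]
    exact add_mem (sub_mem (sym_mem_thetaN (by omega)) (sym_mem_thetaN (by omega)))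
      (sym_mem_thetaN (by omega))
  · rw [dTheta_sym_two hv]
    exact Submodule.smul_mem _ _ (add_mem (sub_mem (sym_mem_thetaN (by omega))
      (sym_mem_thetaN (by omega))) (sym_mem_thetaN (by omega)))

section Integration

noncomputable def thetaIntegral : Theta →ₗ[ℚ] Theta :=
  Finsupp.linearCombination ℚ fun p =>
    (1 / ((p.1.2.2.2 : ℚ) + 1)) • sym p.1.1 p.1.2.1 p.1.2.2.1 (p.1.2.2.2 + 1)

noncomputable def thetaDerivative : Theta →ₗ[ℚ] Theta :=
  Finsupp.linearCombination ℚ fun p => (p.1.2.2.2 : ℚ) • sym p.1.1 p.1.2.1 p.1.2.2.1 (p.1.2.2.2 - 1)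

lemma thetaIntegral_sym {a b c l : ℤ} (h : Even (a + b + c + l)) :
    thetaIntegral (sym a b c l) = (1 / ((l : ℚ) + 1)) • sym a b c (l + 1) := by
  by_cases hv : validSym a b c l
  · exact linearCombination_sym _ hv
  · rw [sym_of_not_validSym hv, sym_of_not_validSym (mt (validSym_add_one_iff h).mp hv),
      map_zero, smul_zero]

lemma thetaIntegral_sym_zero {a b c : ℤ} (h : Even (a + b + c)) :
    thetaIntegral (sym a b c 0) = sym a b c 1 := by
  rw [thetaIntegral_sym (by simpa using h)]
  norm_num

lemma thetaDerivative_sym_add_one {a b c l : ℤ} (h : Even (a + b + c + l)) :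
    thetaDerivative (sym a b c (l + 1)) = ((l : ℚ) + 1) • sym a b c l := by
  by_cases hv : validSym a b c (l + 1)
  · rw [thetaDerivative, linearCombination_sym _ hv]
    push_cast
    rw [add_sub_cancel_right]
  · rw [sym_of_not_validSym hv, sym_of_not_validSym (mt (validSym_add_one_iff h).mpr hv),
      map_zero, smul_zero]

lemma thetaIntegral_le_comap (n : ℤ) : ThetaN n ≤ (ThetaN (n + 1)).comap thetaIntegral :=
  thetaN_le_comap_of_sym fun a b c l hv hw => by
    rw [thetaIntegral, linearCombination_sym _ hv]
    exact Submodule.smul_mem _ _ (sym_mem_thetaN (by simp only; omega))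

lemma thetaDerivative_le_comap (n : ℤ) : ThetaN (n + 1) ≤ (ThetaN n).comap thetaDerivative :=
  thetaN_le_comap_of_sym fun a b c l hv hw => by
    rw [thetaDerivative, linearCombination_sym _ hv]
    exact Submodule.smul_mem _ _ (sym_mem_thetaN (by simp only; omega))

variable {n : ℤ}

lemma thetaDerivative_comp_thetaIntegral_eqOn (hn : Even n) :
    Set.EqOn (thetaDerivative ∘ₗ thetaIntegral) (LinearMap.id : Theta →ₗ[ℚ] Theta) (ThetaN n) :=
  eqOn_thetaN_of_sym fun a b c l hv hw => by
    have hev : Even (a + b + c + l) := hw ▸ hn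
    have hl : (l : ℚ) + 1 ≠ 0 := by
      have := ((validSym_iff_of_even hev).mp hv).2
      exact_mod_cast (show l + 1 ≠ 0 by omega)
    rw [LinearMap.comp_apply, thetaIntegral_sym hev, map_smul, thetaDerivative_sym_add_one hev,
      smul_smul, one_div_mul_cancel hl, one_smul, LinearMap.id_apply]

lemma thetaIntegral_comp_thetaDerivative_eqOn (hn : Even n) :
    Set.EqOn (thetaIntegral ∘ₗ thetaDerivative) (LinearMap.id : Theta →ₗ[ℚ] Theta)
      (ThetaN (n + 1)) :=
  eqOn_thetaN_of_sym fun a b c l hv hw => by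
    obtain ⟨m, rfl⟩ : ∃ m, l = m + 1 := ⟨l - 1, by ring⟩
    have hev : Even (a + b + c + m) := by
      rw [show a + b + c + m = n by omega]
      exact hn
    have hm : (m : ℚ) + 1 ≠ 0 := by
      have := ((validSym_iff_of_even hev).mp ((validSym_add_one_iff hev).mp hv)).2
      exact_mod_cast (show m + 1 ≠ 0 by omega)
    rw [LinearMap.comp_apply, thetaDerivative_sym_add_one hev, map_smul, thetaIntegral_sym hev,
      smul_smul, mul_one_div_cancel hm, one_smul, LinearMap.id_apply]

lemma dTheta_comp_thetaIntegral_eqOn (hn : Even n) :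
    Set.EqOn (dTheta ∘ₗ thetaIntegral) (thetaIntegral ∘ₗ dTheta) (ThetaN n) :=
  eqOn_thetaN_of_sym fun a b c l hv hw => by
    have hev : Even (a + b + c + l) := hw ▸ hn
    simp only [LinearMap.comp_apply]
    rcases ((validSym_iff_of_even hev).mp hv).2 with rfl | rfl
    · have he : Even (a + b + c) := by simpa using hev
      have ho : ∀ x y z : ℤ, x + y + z = a + b + c + 1 → Odd (x + y + z) :=
        fun _ _ _ h => h ▸ he.add_one
      rw [thetaIntegral_sym_zero he, dTheta_sym_one ((validSym_add_one_iff hev).mpr hv),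
        sym_zero_of_odd (ho _ _ _ (by ring)), sym_zero_of_odd (ho _ _ _ (by ring)),
        sym_zero_of_odd (ho _ _ _ (by ring)), dTheta_sym_zero, map_zero, sub_zero, add_zero]
    · have he : ∀ x y z : ℤ, x + y + z = a + b + c + 1 → Even (x + y + z) :=
        fun _ _ _ h => h ▸ hev
      rw [thetaIntegral_sym hev, map_smul, one_add_one_eq_two,
        dTheta_sym_two ((validSym_add_one_iff hev).mpr hv), dTheta_sym_one hv, map_add, map_sub, thetaIntegral_sym_zero (he _ _ _ (by ring)),
        thetaIntegral_sym_zero (he _ _ _ (by ring)), thetaIntegral_sym_zero (he _ _ _ (by ring)),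
        smul_smul]
      norm_num

noncomputable def integrationEquiv (hn : Even n) : ThetaN n ≃ₗ[ℚ] ThetaN (n + 1) :=
  LinearEquiv.ofLinearMap (thetaIntegral.restrict (thetaIntegral_le_comap n))
    (thetaDerivative.restrict (thetaDerivative_le_comap n))
    (LinearMap.ext fun x => Subtype.ext (thetaIntegral_comp_thetaDerivative_eqOn hn x.2))
    (LinearMap.ext fun x => Subtype.ext (thetaDerivative_comp_thetaIntegral_eqOn hn x.2))

end Integration

theorem integration_iso_general (n : ℤ) (hne : Even n) :
    (∀ a b c l : ℤ, validSym a b c l → a + b + c + l = n →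
      (l = 0 ∨ l = 1) ∧ sym a b c (l + 1) ≠ 0) ∧
    ∃ (hd : ∀ x ∈ ThetaN n, dTheta x ∈ ThetaN n)
      (e : ThetaN n ≃ₗ[ℚ] ThetaN (n + 1)),
      (∀ (a b c l : ℤ) (h : sym a b c l ∈ ThetaN n), a + b + c + l = n →
        ((e ⟨sym a b c l, h⟩ : Theta) = (1 / ((l : ℚ) + 1)) • sym a b c (l + 1))) ∧
      (∀ x : ThetaN n, dTheta ((e x : ThetaN (n + 1)) : Theta)
          = ((e ⟨dTheta (x : Theta), hd (x : Theta) x.2⟩ : ThetaN (n + 1)) : Theta)) := by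
  refine ⟨fun a b c l hv hw => ?_, dTheta_le_comap n, integrationEquiv hne,
    fun a b c l _ hw => thetaIntegral_sym (hw ▸ hne),
    fun x => dTheta_comp_thetaIntegral_eqOn hne x.2⟩
  have hev : Even (a + b + c + l) := hw ▸ hne
  exact ⟨((validSym_iff_of_even hev).mp hv).2, sym_ne_zero ((validSym_add_one_iff hev).mpr hv)⟩

/-- For even `n ≥ 4`, the integration map `I : Θ_n → Θ_{n+1}`,
`[a,b,c]^l ↦ (1/(l+1)) ⬝ [a,b,c]^{l+1}`, is well defined (every valid basis
symbol of weight `n` has `l ∈ {0,1}` and its image is a nonzero basis symbol),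
is a linear isomorphism `Θ_n ≃ Θ_{n+1}`, and commutes with `d`. -/
theorem integration_iso (n : ℤ) (hn : 4 ≤ n) (hne : Even n) :
    (∀ a b c l : ℤ, validSym a b c l → a + b + c + l = n →
      (l = 0 ∨ l = 1) ∧ sym a b c (l + 1) ≠ 0) ∧
    ∃ (hd : ∀ x ∈ ThetaN n, dTheta x ∈ ThetaN n)
      (e : ThetaN n ≃ₗ[ℚ] ThetaN (n + 1)),
      (∀ (a b c l : ℤ) (h : sym a b c l ∈ ThetaN n), a + b + c + l = n →
        ((e ⟨sym a b c l, h⟩ : Theta) = (1 / ((l : ℚ) + 1)) • sym a b c (l + 1))) ∧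
      (∀ x : ThetaN n, dTheta ((e x : ThetaN (n + 1)) : Theta)
          = ((e ⟨dTheta (x : Theta), hd (x : Theta) x.2⟩ : ThetaN (n + 1)) : Theta)) :=
  integration_iso_general n hne
end

section
/- Let n ≥ 4 be even, and let V_0 ⊂ Θ_n be the span of the basis symbols [a,b,c]^0 with a+b+c = n, and V_1 ⊂ Θ_n the span of the basis symbols [a,b,c]^1 with a+b+c = n−1. Then the restriction of d to V_1 is an injective linear map V_1 → V_0, and the quotient space V_0 / d(V_1) has dimension ⌊n/6⌋ over ℚ. -/
/-- `V_0 ⊂ Θ_n`: the span of the symbols `[a,b,c]^0` with `a + b + c = n`. -/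
noncomputable def V0 (n : ℤ) : Submodule ℚ Theta :=
  Submodule.span ℚ {x | ∃ a b c : ℤ, a + b + c = n ∧ x = sym a b c 0}

/-- `V_1 ⊂ Θ_n`: the span of the symbols `[a,b,c]^1` with `a + b + c = n - 1`. -/
noncomputable def V1 (n : ℤ) : Submodule ℚ Theta :=
  Submodule.span ℚ {x | ∃ a b c : ℤ, a + b + c = n - 1 ∧ x = sym a b c 1}

/-!
The symbols spanning `V₁` and `V₀` are indexed by the triples `0 ≤ a < b < c` with
`a + b + c = n - 1`, resp. `n` (for `V₀` because `n` is even). Order the symbols `[a,b,c]^1` by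
`c`: the term `[a,b,c+1]^0` of `d [a,b,c]^1` occurs in no other `d [a',b',c']^1` with `c' ≤ c`,
so `d` is unitriangular on `V₁`, hence injective, and the cokernel has dimension
`#{sum n} - #{sum n - 1}`. The shift `(a,b,c) ↦ (a,b,c+1)` matches the triples of sum `n - 1`
with those of sum `n` having `c ≠ b + 1`; the remaining triples `(n-1-2b, b, b+1)` correspond to
`(n-1)/3 < b ≤ (n-1)/2`, and for even `n` there are `⌊n/6⌋` of them.
-/

open Finsupp Module

theorem Finsupp.injOn_supported_of_unitriangular {ι κ R β : Type*} [DecidableEq ι] [Ring R]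
    [LinearOrder β] (f : (ι →₀ R) →ₗ[R] κ →₀ R) (S : Set ι) (h : ι → β)
    (hf : ∀ p ∈ S, ∃ q, ∀ p' ∈ S, h p' ≤ h p →
      f (single p' 1) q = if p' = p then 1 else 0) :
    Set.InjOn f (supported R R S) := by
  suffices ∀ x ∈ supported R R S, f x = 0 → x = 0 from fun x hx y hy hxy =>
    sub_eq_zero.1 (this _ (sub_mem hx hy) (by rw [map_sub, hxy, sub_self]))
  intro x hx hfx
  by_contra hx0
  obtain ⟨p, hp, hmax⟩ := x.support.exists_max_image h (support_nonempty_iff.2 hx0)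
  obtain ⟨q, hq⟩ := hf p (hx hp)
  have hcoeff : f x q = x p := by
    conv_lhs => rw [← x.sum_single]
    rw [map_finsuppSum, Finsupp.sum_apply, Finsupp.sum, Finset.sum_eq_single p]
    · rw [← smul_single_one, map_smul, smul_apply, hq p (hx hp) le_rfl, if_pos rfl, smul_eq_mul,
        mul_one]
    · intro p' hp' hne
      rw [← smul_single_one, map_smul, smul_apply, hq p' (hx hp') (hmax p' hp'), if_neg hne,
        smul_zero]
    · intro hp'
      exact absurd hp hp'
  exact mem_support_iff.1 hp (hcoeff ▸ hfx ▸ rfl)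

theorem Finsupp.finrank_supported {α R : Type*} [Ring R] [StrongRankCondition R] {s : Set α}
    (hs : s.Finite) : finrank R (supported R R s) = s.ncard := by
  have := hs.fintype
  rw [(supportedEquivFinsupp s).finrank_eq, finrank_finsupp_self, Set.ncard_eq_toFinset_card',
    Set.toFinset_card]

theorem Submodule.finrank_quotient_comap_map_add_finrank {K V W : Type*} [DivisionRing K]
    [AddCommGroup V] [Module K V] [AddCommGroup W] [Module K W] (f : V →ₗ[K] W)
    {A : Submodule K V} {B : Submodule K W} [FiniteDimensional K B] (hAB : A.map f ≤ B)
    (hf : Set.InjOn f A) :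
    finrank K (B ⧸ (A.map f).comap B.subtype) + finrank K A = finrank K B := by
  have hinj : Function.Injective (f ∘ₗ A.subtype) := fun x y hxy =>
    Subtype.ext (hf x.2 y.2 hxy)
  have hrange : LinearMap.range (f ∘ₗ A.subtype) = A.map f := by
    rw [LinearMap.range_comp, Submodule.range_subtype]
  rw [← Submodule.finrank_quotient_add_finrank ((A.map f).comap B.subtype),
    (Submodule.comapSubtypeEquivOfLe hAB).finrank_eq, ← hrange,
    LinearMap.finrank_range_of_inj hinj]

def increasingTriples (s : ℤ) : Set (ℤ × ℤ × ℤ) :=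
  {t | 0 ≤ t.1 ∧ t.1 < t.2.1 ∧ t.2.1 < t.2.2 ∧ t.1 + t.2.1 + t.2.2 = s}

theorem finite_increasingTriples (s : ℤ) : (increasingTriples s).Finite := by
  refine ((Set.finite_Icc 0 s).prod ((Set.finite_Icc 0 s).prod (Set.finite_Icc 0 s))).subset ?_
  rintro ⟨a, b, c⟩ ⟨ha, hab, hbc, hs⟩
  dsimp only at ha hab hbc hs
  simp only [Set.mem_prod, Set.mem_Icc]
  omega

theorem ncard_increasingTriples (s : ℤ) :
    (increasingTriples s).ncard =
      (increasingTriples (s - 1)).ncard + ((s - 1) / 2 - (s - 1) / 3).toNat := by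
  have hshift : (increasingTriples s \ {t | t.2.2 = t.2.1 + 1}) =
      (fun t : ℤ × ℤ × ℤ => (t.1, t.2.1, t.2.2 + 1)) '' increasingTriples (s - 1) := by
    ext ⟨a, b, c⟩
    simp only [increasingTriples, Set.mem_sdiff, Set.mem_ofPred_eq, Set.mem_image, Prod.exists,
      Prod.mk.injEq]
    constructor
    · rintro ⟨⟨ha, hab, hbc, hs⟩, hc⟩
      exact ⟨a, b, c - 1, ⟨ha, hab, by omega, by omega⟩, rfl, rfl, by omega⟩
    · rintro ⟨a, b, c, ⟨ha, hab, hbc, hs⟩, rfl, rfl, rfl⟩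
      omega
  have hdiag : (increasingTriples s ∩ {t | t.2.2 = t.2.1 + 1}) =
      (fun b : ℤ => (s - 1 - 2 * b, b, b + 1)) '' Set.Ioc ((s - 1) / 3) ((s - 1) / 2) := by
    ext ⟨a, b, c⟩
    simp only [increasingTriples, Set.mem_inter_iff, Set.mem_ofPred_eq, Set.mem_image,
      Set.mem_Ioc, Prod.mk.injEq]
    constructor
    · rintro ⟨⟨ha, hab, hbc, hs⟩, hc⟩
      exact ⟨b, by omega, by omega, rfl, hc.symm⟩
    · rintro ⟨b, hb, rfl, rfl, rfl⟩
      omega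
  have hshift_inj : Set.InjOn (fun t : ℤ × ℤ × ℤ => (t.1, t.2.1, t.2.2 + 1))
      (increasingTriples (s - 1)) := by
    rintro ⟨a, b, c⟩ - ⟨a', b', c'⟩ - h
    simp only [Prod.mk.injEq] at h ⊢
    omega
  have hdiag_inj : Set.InjOn (fun b : ℤ => (s - 1 - 2 * b, b, b + 1))
      (Set.Ioc ((s - 1) / 3) ((s - 1) / 2)) := by
    intro b _ b' _ h
    simp only [Prod.mk.injEq] at h
    exact h.2.1
  rw [← Set.ncard_inter_add_ncard_sdiff_eq_ncard (increasingTriples s) {t | t.2.2 = t.2.1 + 1}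
    (finite_increasingTriples s), hdiag, hshift, hshift_inj.ncard_image, hdiag_inj.ncard_image,
    ← Finset.coe_Ioc, Set.ncard_coe_finset, Int.card_Ioc, add_comm]

theorem validSym_zero {a b c : ℤ} (ha : 0 ≤ a) (hab : a < b) (hbc : b < c)
    (he : Even (a + b + c)) : validSym a b c 0 :=
  ⟨ha, hab, hbc, Or.inl rfl, fun _ => he, by norm_num⟩

theorem validSym_one {a b c : ℤ} (ha : 0 ≤ a) (hab : a < b) (hbc : b < c) : validSym a b c 1 :=
  ⟨ha, hab, hbc, Or.inr (Or.inl rfl), by norm_num, by norm_num⟩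

theorem sym_apply (a b c l : ℤ) (q : SymIdx) :
    sym a b c l q = if q.1 = (a, b, c, l) then 1 else 0 := by
  classical
  obtain ⟨q, hq⟩ := q
  unfold sym
  split_ifs with hv hqe hqe
  · subst hqe
    exact single_eq_same
  · exact single_eq_of_ne (fun h => hqe (congrArg Subtype.val h))
  · subst hqe
    exact absurd hq hv
  · rfl

theorem dTheta_single (p : SymIdx) : dTheta (single p 1) = dAux p := by
  rw [dTheta, lsum_single, LinearMap.toSpanSingleton_apply, one_smul]

theorem dAux_of_eq_one {p : SymIdx} (hp : p.1.2.2.2 = 1) :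
    dAux p = sym (p.1.1 + 1) p.1.2.1 p.1.2.2.1 0 - sym p.1.1 (p.1.2.1 + 1) p.1.2.2.1 0
      + sym p.1.1 p.1.2.1 (p.1.2.2.1 + 1) 0 := by
  unfold dAux
  rw [if_pos hp]

def symIdxOfSum (l s : ℤ) : Set SymIdx := {p | p.1.2.2.2 = l ∧ p.1.1 + p.1.2.1 + p.1.2.2.1 = s}

theorem span_sym_eq_supported (l s : ℤ) :
    Submodule.span ℚ {x | ∃ a b c : ℤ, a + b + c = s ∧ x = sym a b c l} =
      supported ℚ ℚ (symIdxOfSum l s) := by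
  rw [supported_eq_span_single]
  apply le_antisymm <;> rw [Submodule.span_le]
  · rintro x ⟨a, b, c, hs, rfl⟩
    unfold sym
    split_ifs with hv
    · exact Submodule.subset_span ⟨⟨(a, b, c, l), hv⟩, ⟨rfl, hs⟩, rfl⟩
    · exact zero_mem _
  · rintro x ⟨⟨⟨a, b, c, l'⟩, hv⟩, ⟨rfl, hs⟩, rfl⟩
    exact Submodule.subset_span ⟨a, b, c, hs, by simp [sym, hv]⟩

theorem injOn_triple_symIdxOfSum (l s : ℤ) :
    Set.InjOn (fun p : SymIdx => (p.1.1, p.1.2.1, p.1.2.2.1)) (symIdxOfSum l s) := by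
  intro p ⟨hl, _⟩ p' ⟨hl', _⟩ h
  simp only [Prod.mk.injEq] at h
  exact Subtype.ext (Prod.ext h.1 (Prod.ext h.2.1 (Prod.ext h.2.2 (hl.trans hl'.symm))))

theorem image_triple_symIdxOfSum_subset (l s : ℤ) :
    (fun p : SymIdx => (p.1.1, p.1.2.1, p.1.2.2.1)) '' symIdxOfSum l s ⊆ increasingTriples s := by
  rintro _ ⟨p, ⟨_, hs⟩, rfl⟩
  exact ⟨p.2.1, p.2.2.1, p.2.2.2.1, hs⟩

theorem finite_symIdxOfSum (l s : ℤ) : (symIdxOfSum l s).Finite :=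
  ((finite_increasingTriples s).subset (image_triple_symIdxOfSum_subset l s)).of_finite_image
    (injOn_triple_symIdxOfSum l s)

theorem ncard_symIdxOfSum {l s : ℤ}
    (hl : ∀ a b c : ℤ, 0 ≤ a → a < b → b < c → a + b + c = s → validSym a b c l) :
    (symIdxOfSum l s).ncard = (increasingTriples s).ncard := by
  rw [← (injOn_triple_symIdxOfSum l s).ncard_image]
  refine congrArg _ ((image_triple_symIdxOfSum_subset l s).antisymm ?_)
  rintro ⟨a, b, c⟩ ⟨ha, hab, hbc, hs⟩
  exact ⟨⟨(a, b, c, l), hl a b c ha hab hbc hs⟩, ⟨rfl, hs⟩, rfl⟩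

theorem finrank_span_sym {l s : ℤ}
    (hl : ∀ a b c : ℤ, 0 ≤ a → a < b → b < c → a + b + c = s → validSym a b c l) :
    finrank ℚ (Submodule.span ℚ {x | ∃ a b c : ℤ, a + b + c = s ∧ x = sym a b c l}) =
      (increasingTriples s).ncard := by
  rw [span_sym_eq_supported, finrank_supported (finite_symIdxOfSum l s), ncard_symIdxOfSum hl]

theorem finiteDimensional_span_sym (l s : ℤ) :
    FiniteDimensional ℚ
      (Submodule.span ℚ {x | ∃ a b c : ℤ, a + b + c = s ∧ x = sym a b c l}) := by
  rw [span_sym_eq_supported, supported_eq_span_single]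
  exact FiniteDimensional.span_of_finite ℚ ((finite_symIdxOfSum l s).image _)

theorem map_dTheta_V1_le (n : ℤ) : (V1 n).map dTheta ≤ V0 n := by
  rw [V1, span_sym_eq_supported, supported_eq_span_single, Submodule.map_span_le]
  rintro _ ⟨p, ⟨hl, hs⟩, rfl⟩
  dsimp only
  rw [dTheta_single, dAux_of_eq_one hl]
  refine add_mem (sub_mem ?_ ?_) ?_ <;> exact Submodule.subset_span ⟨_, _, _, by omega, rfl⟩

theorem dTheta_injOn_V1 {n : ℤ} (hn : Even n) : Set.InjOn dTheta (V1 n) := by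
  classical
  rw [V1, span_sym_eq_supported]
  refine injOn_supported_of_unitriangular dTheta _ (fun p => p.1.2.2.1) ?_
  rintro ⟨⟨a, b, c, l⟩, hv⟩ ⟨hl, hs⟩
  obtain ⟨ha, hab, hbc, -⟩ := id hv
  obtain ⟨m, hm⟩ := hn
  dsimp only at hl hs ha hab hbc
  subst hl
  have hq : validSym a b (c + 1) 0 := validSym_zero ha hab (by omega) ⟨m, by omega⟩
  refine ⟨⟨(a, b, c + 1, 0), hq⟩, fun p' ⟨hl', hs'⟩ hc => ?_⟩
  rw [dTheta_single, dAux_of_eq_one hl']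
  split_ifs with hpp
  · subst hpp
    erw [Finsupp.add_apply, Finsupp.sub_apply, sym_apply, sym_apply, sym_apply]
    simp only [Prod.mk.injEq, and_true]
    rw [if_neg (by omega), if_neg (by omega), if_pos trivial, sub_zero, zero_add]
  · obtain ⟨⟨a', b', c', l'⟩, hv'⟩ := p'
    dsimp only at hl' hs' hc
    subst hl'
    have hne : ¬(a' = a ∧ b' = b ∧ c' = c) := by
      rintro ⟨rfl, rfl, rfl⟩
      exact hpp rfl
    erw [Finsupp.add_apply, Finsupp.sub_apply, sym_apply, sym_apply, sym_apply]
    simp only [Prod.mk.injEq, and_true]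
    rw [if_neg (by omega), if_neg (by omega), if_neg (by omega), sub_zero, add_zero]

theorem theta_cohomology_dim_general (n : ℤ) (hne : Even n) :
    Submodule.map dTheta (V1 n) ≤ V0 n ∧
    Set.InjOn (fun x => dTheta x) (V1 n : Set Theta) ∧
    Module.finrank ℚ
        (↥(V0 n) ⧸ (Submodule.map dTheta (V1 n)).comap (V0 n).subtype)
      = (n / 6).toNat := by
  have hmap := map_dTheta_V1_le n
  have hinj := dTheta_injOn_V1 hne
  refine ⟨hmap, hinj, ?_⟩
  obtain ⟨m, rfl⟩ := hne
  have : FiniteDimensional ℚ (V0 (m + m)) := finiteDimensional_span_sym 0 (m + m)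
  have hdim := Submodule.finrank_quotient_comap_map_add_finrank dTheta hmap hinj
  have hV0 : finrank ℚ (V0 (m + m)) = (increasingTriples (m + m)).ncard :=
    finrank_span_sym fun _ _ _ ha hab hbc hs => validSym_zero ha hab hbc ⟨m, hs⟩
  have hV1 : finrank ℚ (V1 (m + m)) = (increasingTriples (m + m - 1)).ncard :=
    finrank_span_sym fun _ _ _ ha hab hbc _ => validSym_one ha hab hbc
  have hcount := ncard_increasingTriples (m + m)
  omega

/-- For even `n ≥ 4`, the restriction of `d` to `V_1` is an injective linear
map `V_1 → V_0`, and the quotient `V_0 / d(V_1)` has dimension `⌊n/6⌋`. -/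
theorem theta_cohomology_dim (n : ℤ) (hn : 4 ≤ n) (hne : Even n) :
    Submodule.map dTheta (V1 n) ≤ V0 n ∧
    Set.InjOn (fun x => dTheta x) (V1 n : Set Theta) ∧
    Module.finrank ℚ
        (↥(V0 n) ⧸ (Submodule.map dTheta (V1 n)).comap (V0 n).subtype)
      = (n / 6).toNat :=
  theta_cohomology_dim_general n hne
end
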